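/- arXiv:1509.08890 — 5 statements merged into one kernel-verified Lean document; each statement's English description precedes it below -/
import Mathlib

section
/- Let G and H be unital associative F-algebras that are Lie nilpotent of class at most 2. Then in G ⊗ H, for k ≥ 1, the left-normed commutator [g1⊗h1, ..., g_{2k+1}⊗h_{2k+1}] equals [g1,g2][g3,g4]···[g_{2k-1},g_{2k}] g_{2k+1} ⊗ [h1 h2, h3][h4,h5]···[h_{2k}, h_{2k+1}] + [g2 g1, g3][g4,g5]···[g_{2k}, g_{2k+1}] ⊗ [h1,h2][h3,h4]···[h_{2k-1},h_{2k}] h_{2k+1}. -/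
open scoped TensorProduct

/-- The left-normed commutator `[a, l₁, l₂, …]`. -/
def lnc {A : Type*} [Ring A] (a : A) (l : List A) : A :=
  l.foldl (fun x y => x * y - y * x) a

lemma lnc_concat {A : Type*} [Ring A] (a x : A) (l : List A) :
    lnc a (l.concat x) = (lnc a l) * x - x * (lnc a l) := by
  simp [lnc, List.concat_eq_append, List.foldl_append]

section Aux

variable {F : Type*} [Field F] {G H : Type*} [Ring G] [Ring H] [Algebra F G] [Algebra F H]

/-- centrality of commutators from the class-2 hypothesis -/
lemma comm_central (hG : ∀ g1 g2 g3 : G, (g1 * g2 - g2 * g1) * g3 - g3 * (g1 * g2 - g2 * g1) = 0)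
    (a b : G) : ∀ t, (a * b - b * a) * t = t * (a * b - b * a) :=
  fun t => sub_eq_zero.mp (hG a b t)

lemma central_mul {Z₁ Z₂ : G} (h1 : ∀ t, Z₁ * t = t * Z₁) (h2 : ∀ t, Z₂ * t = t * Z₂) :
    ∀ t, (Z₁ * Z₂) * t = t * (Z₁ * Z₂) := by
  intro t
  rw [mul_assoc, h2 t, ← mul_assoc, h1 t, mul_assoc]

lemma central_list_prod {l : List G} (hl : ∀ z ∈ l, ∀ t, z * t = t * z) :
    ∀ t, l.prod * t = t * l.prod := by
  induction l with
  | nil => simp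
  | cons a l ih =>
    simp only [List.prod_cons]
    exact central_mul (hl a (by simp)) (ih fun z hz => hl z (by simp [hz]))

lemma brkt_central_left (Z : G) (hZ : ∀ t, Z * t = t * Z) (w : H) (x : G) (y : H) :
    (Z ⊗ₜ[F] w) * (x ⊗ₜ[F] y) - (x ⊗ₜ[F] y) * (Z ⊗ₜ[F] w)
      = (Z * x) ⊗ₜ[F] (w * y - y * w) := by
  rw [Algebra.TensorProduct.tmul_mul_tmul, Algebra.TensorProduct.tmul_mul_tmul, ← hZ x,
    TensorProduct.tmul_sub]

lemma brkt_central_right (W : H) (hW : ∀ t, W * t = t * W) (v : G) (x : G) (y : H) :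
    (v ⊗ₜ[F] W) * (x ⊗ₜ[F] y) - (x ⊗ₜ[F] y) * (v ⊗ₜ[F] W)
      = (v * x - x * v) ⊗ₜ[F] (W * y) := by
  rw [Algebra.TensorProduct.tmul_mul_tmul, Algebra.TensorProduct.tmul_mul_tmul, ← hW y,
    TensorProduct.sub_tmul]

lemma brkt_tmul_tmul (a x : G) (b y : H) :
    (a ⊗ₜ[F] b) * (x ⊗ₜ[F] y) - (x ⊗ₜ[F] y) * (a ⊗ₜ[F] b)
      = (a * x - x * a) ⊗ₜ[F] (b * y) + (x * a) ⊗ₜ[F] (b * y - y * b) := by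
  rw [Algebra.TensorProduct.tmul_mul_tmul, Algebra.TensorProduct.tmul_mul_tmul,
    TensorProduct.sub_tmul, TensorProduct.tmul_sub]
  abel

/-- inductive step, first summand -/
lemma stepA (hG : ∀ g1 g2 g3 : G, (g1 * g2 - g2 * g1) * g3 - g3 * (g1 * g2 - g2 * g1) = 0)
    (P a x x' : G) (B y y' : H)
    (hP : ∀ t, P * t = t * P) (hB : ∀ t, B * t = t * B) :
    (((P * a) ⊗ₜ[F] B) * (x ⊗ₜ[F] y) - (x ⊗ₜ[F] y) * ((P * a) ⊗ₜ[F] B)) * (x' ⊗ₜ[F] y')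
      - (x' ⊗ₜ[F] y') * (((P * a) ⊗ₜ[F] B) * (x ⊗ₜ[F] y) - (x ⊗ₜ[F] y) * ((P * a) ⊗ₜ[F] B))
      = (P * (a * x - x * a) * x') ⊗ₜ[F] (B * (y * y' - y' * y)) := by
  rw [brkt_central_right B hB (P * a) x y]
  have e1 : P * a * x - x * (P * a) = P * (a * x - x * a) := by
    rw [← mul_assoc, ← hP x, mul_sub, mul_assoc, mul_assoc]
  rw [e1]
  have hZ : ∀ t, (P * (a * x - x * a)) * t = t * (P * (a * x - x * a)) :=
    central_mul hP (comm_central hG a x)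
  rw [brkt_central_left (P * (a * x - x * a)) hZ (B * y) x' y']
  have e2 : B * y * y' - y' * (B * y) = B * (y * y' - y' * y) := by
    rw [← mul_assoc, ← hB y', mul_sub, mul_assoc, mul_assoc]
  rw [e2]

/-- inductive step, second summand -/
lemma stepC (hH : ∀ h1 h2 h3 : H, (h1 * h2 - h2 * h1) * h3 - h3 * (h1 * h2 - h2 * h1) = 0)
    (C x x' : G) (Q d y y' : H)
    (hC : ∀ t, C * t = t * C) (hQ : ∀ t, Q * t = t * Q) :
    ((C ⊗ₜ[F] (Q * d)) * (x ⊗ₜ[F] y) - (x ⊗ₜ[F] y) * (C ⊗ₜ[F] (Q * d))) * (x' ⊗ₜ[F] y')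
      - (x' ⊗ₜ[F] y') * ((C ⊗ₜ[F] (Q * d)) * (x ⊗ₜ[F] y) - (x ⊗ₜ[F] y) * (C ⊗ₜ[F] (Q * d)))
      = (C * (x * x' - x' * x)) ⊗ₜ[F] (Q * (d * y - y * d) * y') := by
  rw [brkt_central_left C hC (Q * d) x y]
  have e1 : Q * d * y - y * (Q * d) = Q * (d * y - y * d) := by
    rw [← mul_assoc, ← hQ y, mul_sub, mul_assoc, mul_assoc]
  rw [e1]
  have hW : ∀ t, (Q * (d * y - y * d)) * t = t * (Q * (d * y - y * d)) :=
    central_mul hQ (comm_central hH d y)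
  rw [brkt_central_right (Q * (d * y - y * d)) hW (C * x) x' y']
  have e2 : C * x * x' - x' * (C * x) = C * (x * x' - x' * x) := by
    rw [← mul_assoc, ← hC x', mul_sub, mul_assoc, mul_assoc]
  rw [e2]

end Aux

/-- formula for the left-normed commutator of odd length `2k+1`
of elementary tensors in `G ⊗ H`, for `G`, `H` Lie nilpotent of class at most 2.
Here `g i`, `h i` (for `1 ≤ i ≤ 2k+1`) play the role of `gᵢ`, `hᵢ`. -/
theorem tensor_lnc_odd_formula
    (F : Type*) [Field F] (G H : Type*) [Ring G] [Ring H] [Algebra F G] [Algebra F H]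
    (hG : ∀ g1 g2 g3 : G, (g1 * g2 - g2 * g1) * g3 - g3 * (g1 * g2 - g2 * g1) = 0)
    (hH : ∀ h1 h2 h3 : H, (h1 * h2 - h2 * h1) * h3 - h3 * (h1 * h2 - h2 * h1) = 0)
    (k : ℕ) (hk : 1 ≤ k) (g : ℕ → G) (h : ℕ → H) :
    lnc ((g 1) ⊗ₜ[F] (h 1)) (List.ofFn fun i : Fin (2 * k) => (g (i + 2)) ⊗ₜ[F] (h (i + 2)))
      = ((List.ofFn fun s : Fin k =>
            g (2 * s + 1) * g (2 * s + 2) - g (2 * s + 2) * g (2 * s + 1)).prod * g (2 * k + 1))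
          ⊗ₜ[F]
        ((h 1 * h 2 * h 3 - h 3 * (h 1 * h 2)) *
          (List.ofFn fun s : Fin (k - 1) =>
            h (2 * s + 4) * h (2 * s + 5) - h (2 * s + 5) * h (2 * s + 4)).prod)
      + ((g 2 * g 1 * g 3 - g 3 * (g 2 * g 1)) *
          (List.ofFn fun s : Fin (k - 1) =>
            g (2 * s + 4) * g (2 * s + 5) - g (2 * s + 5) * g (2 * s + 4)).prod)
          ⊗ₜ[F]
        ((List.ofFn fun s : Fin k =>
            h (2 * s + 1) * h (2 * s + 2) - h (2 * s + 2) * h (2 * s + 1)).prod * h (2 * k + 1)) := by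
  induction k, hk using Nat.le_induction with
  | base =>
    simp only [lnc, List.ofFn_succ, List.ofFn_zero, List.foldl_cons, List.foldl_nil,
      List.prod_cons, List.prod_nil, Fin.val_zero, Fin.val_succ]
    norm_num
    have e0 : (g 1 * g 2) ⊗ₜ[F] (h 1 * h 2) - (g 2 * g 1) ⊗ₜ[F] (h 2 * h 1)
        = (g 1 * g 2 - g 2 * g 1) ⊗ₜ[F] (h 1 * h 2)
          + (g 2 * g 1) ⊗ₜ[F] (h 1 * h 2 - h 2 * h 1) := by
      rw [TensorProduct.sub_tmul, TensorProduct.tmul_sub]; abel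
    rw [e0]
    have expand : ∀ s t u : G ⊗[F] H, (s + t) * u - u * (s + t)
        = (s * u - u * s) + (t * u - u * t) := by intros; noncomm_ring
    rw [expand, brkt_central_left _ (comm_central hG (g 1) (g 2)) (h 1 * h 2) (g 3) (h 3),
      brkt_central_right _ (comm_central hH (h 1) (h 2)) (g 2 * g 1) (g 3) (h 3)]
  | succ n hn ih =>
    obtain ⟨m, rfl⟩ : ∃ m, n = m + 1 := ⟨n - 1, (Nat.succ_pred_eq_of_pos hn).symm⟩
    have hlist : (List.ofFn fun i : Fin (2*(m+1+1)) => (g (i+2)) ⊗ₜ[F] (h (i+2)))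
        = ((List.ofFn fun i : Fin (2*(m+1)) => (g (i+2)) ⊗ₜ[F] (h (i+2))).concat
            ((g (2*(m+1)+2)) ⊗ₜ[F] (h (2*(m+1)+2)))).concat
            ((g (2*(m+1)+3)) ⊗ₜ[F] (h (2*(m+1)+3))) := by
      rw [List.ofFn_succ', List.ofFn_succ']
      simp only [Fin.coe_castSucc, Fin.val_last]
      norm_num
    rw [hlist]
    rw [lnc_concat, lnc_concat, ih]
    have expand2 : ∀ s t u v : G ⊗[F] H,
        ((s + t) * u - u * (s + t)) * v - v * ((s + t) * u - u * (s + t))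
          = ((s * u - u * s) * v - v * (s * u - u * s))
            + ((t * u - u * t) * v - v * (t * u - u * t)) := by
      intros; noncomm_ring
    rw [expand2]
    have hPG : ∀ t, (List.ofFn fun s : Fin (m+1) =>
        g (2*(s:ℕ)+1) * g (2*(s:ℕ)+2) - g (2*(s:ℕ)+2) * g (2*(s:ℕ)+1)).prod * t
        = t * (List.ofFn fun s : Fin (m+1) =>
        g (2*(s:ℕ)+1) * g (2*(s:ℕ)+2) - g (2*(s:ℕ)+2) * g (2*(s:ℕ)+1)).prod := by
      refine central_list_prod ?_
      intro z hz t
      simp only [List.mem_ofFn, Set.mem_range] at hz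
      obtain ⟨s, rfl⟩ := hz
      exact comm_central hG _ _ t
    have hQH : ∀ t, (List.ofFn fun s : Fin (m+1) =>
        h (2*(s:ℕ)+1) * h (2*(s:ℕ)+2) - h (2*(s:ℕ)+2) * h (2*(s:ℕ)+1)).prod * t
        = t * (List.ofFn fun s : Fin (m+1) =>
        h (2*(s:ℕ)+1) * h (2*(s:ℕ)+2) - h (2*(s:ℕ)+2) * h (2*(s:ℕ)+1)).prod := by
      refine central_list_prod ?_
      intro z hz t
      simp only [List.mem_ofFn, Set.mem_range] at hz
      obtain ⟨s, rfl⟩ := hz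
      exact comm_central hH _ _ t
    have hBH : ∀ t, ((h 1 * h 2 * h 3 - h 3 * (h 1 * h 2)) *
        (List.ofFn fun s : Fin (m+1-1) =>
          h (2*(s:ℕ)+4) * h (2*(s:ℕ)+5) - h (2*(s:ℕ)+5) * h (2*(s:ℕ)+4)).prod) * t
        = t * ((h 1 * h 2 * h 3 - h 3 * (h 1 * h 2)) *
        (List.ofFn fun s : Fin (m+1-1) =>
          h (2*(s:ℕ)+4) * h (2*(s:ℕ)+5) - h (2*(s:ℕ)+5) * h (2*(s:ℕ)+4)).prod) := by
      refine central_mul (comm_central hH (h 1 * h 2) (h 3)) (central_list_prod ?_)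
      intro z hz t
      simp only [List.mem_ofFn, Set.mem_range] at hz
      obtain ⟨s, rfl⟩ := hz
      exact comm_central hH _ _ t
    have hCG : ∀ t, ((g 2 * g 1 * g 3 - g 3 * (g 2 * g 1)) *
        (List.ofFn fun s : Fin (m+1-1) =>
          g (2*(s:ℕ)+4) * g (2*(s:ℕ)+5) - g (2*(s:ℕ)+5) * g (2*(s:ℕ)+4)).prod) * t
        = t * ((g 2 * g 1 * g 3 - g 3 * (g 2 * g 1)) *
        (List.ofFn fun s : Fin (m+1-1) =>
          g (2*(s:ℕ)+4) * g (2*(s:ℕ)+5) - g (2*(s:ℕ)+5) * g (2*(s:ℕ)+4)).prod) := by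
      refine central_mul (comm_central hG (g 2 * g 1) (g 3)) (central_list_prod ?_)
      intro z hz t
      simp only [List.mem_ofFn, Set.mem_range] at hz
      obtain ⟨s, rfl⟩ := hz
      exact comm_central hG _ _ t
    rw [stepA hG _ _ _ _ _ _ _ hPG hBH, stepC hH _ _ _ _ _ _ _ hCG hQH]
    have pg : (List.ofFn fun s : Fin (m+1+1) =>
        g (2*(s:ℕ)+1) * g (2*(s:ℕ)+2) - g (2*(s:ℕ)+2) * g (2*(s:ℕ)+1)).prod
        = (List.ofFn fun s : Fin (m+1) =>
            g (2*(s:ℕ)+1) * g (2*(s:ℕ)+2) - g (2*(s:ℕ)+2) * g (2*(s:ℕ)+1)).prod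
          * (g (2*(m+1)+1) * g (2*(m+1)+2) - g (2*(m+1)+2) * g (2*(m+1)+1)) := by
      rw [List.ofFn_succ', List.prod_concat]
      norm_num
    have ph : (List.ofFn fun s : Fin (m+1+1) =>
        h (2*(s:ℕ)+1) * h (2*(s:ℕ)+2) - h (2*(s:ℕ)+2) * h (2*(s:ℕ)+1)).prod
        = (List.ofFn fun s : Fin (m+1) =>
            h (2*(s:ℕ)+1) * h (2*(s:ℕ)+2) - h (2*(s:ℕ)+2) * h (2*(s:ℕ)+1)).prod
          * (h (2*(m+1)+1) * h (2*(m+1)+2) - h (2*(m+1)+2) * h (2*(m+1)+1)) := by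
      rw [List.ofFn_succ', List.prod_concat]
      norm_num
    have pg2 : (List.ofFn fun s : Fin (m+1+1-1) =>
        g (2*(s:ℕ)+4) * g (2*(s:ℕ)+5) - g (2*(s:ℕ)+5) * g (2*(s:ℕ)+4)).prod
        = (List.ofFn fun s : Fin (m+1-1) =>
            g (2*(s:ℕ)+4) * g (2*(s:ℕ)+5) - g (2*(s:ℕ)+5) * g (2*(s:ℕ)+4)).prod
          * (g (2*(m+1)+2) * g (2*(m+1)+3) - g (2*(m+1)+3) * g (2*(m+1)+2)) := by
      rw [List.ofFn_succ', List.prod_concat]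
      norm_num [show 2*(m+1)+2 = 2*m+4 from by ring, show 2*(m+1)+3 = 2*m+5 from by ring]
    have ph2 : (List.ofFn fun s : Fin (m+1+1-1) =>
        h (2*(s:ℕ)+4) * h (2*(s:ℕ)+5) - h (2*(s:ℕ)+5) * h (2*(s:ℕ)+4)).prod
        = (List.ofFn fun s : Fin (m+1-1) =>
            h (2*(s:ℕ)+4) * h (2*(s:ℕ)+5) - h (2*(s:ℕ)+5) * h (2*(s:ℕ)+4)).prod
          * (h (2*(m+1)+2) * h (2*(m+1)+3) - h (2*(m+1)+3) * h (2*(m+1)+2)) := by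
      rw [List.ofFn_succ', List.prod_concat]
      norm_num [show 2*(m+1)+2 = 2*m+4 from by ring, show 2*(m+1)+3 = 2*m+5 from by ring]
    rw [show 2*(m+1+1)+1 = 2*(m+1)+3 from by ring, pg, ph, pg2, ph2]
    simp only [mul_assoc]
end

section
/- Let G and H be unital associative F-algebras that are Lie nilpotent of class at most 2. Then in G ⊗ H, for k > 1, the left-normed commutator [g1⊗h1, ..., g_{2k}⊗h_{2k}] equals [g1,g2][g3,g4]···[g_{2k-1},g_{2k}] ⊗ [h1 h2, h3][h4,h5]···[h_{2k-2}, h_{2k-1}] h_{2k} + [g2 g1, g3][g4,g5]···[g_{2k-2}, g_{2k-1}] g_{2k} ⊗ [h1,h2][h3,h4]···[h_{2k-1},h_{2k}]. -/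
open scoped TensorProduct

def brkt {R : Type*} [Ring R] (x y : R) : R := x * y - y * x

def IsC {R : Type*} [Ring R] (u : R) : Prop := ∀ y, u * y = y * u

section ring
variable {R : Type*} [Ring R]

lemma IsC.mul {u v : R} (hu : IsC u) (hv : IsC v) : IsC (u * v) := fun y => by
  rw [mul_assoc, hv, ← mul_assoc, hu, mul_assoc]

lemma IsC.one : IsC (1 : R) := fun y => by simp

lemma brkt_add_left (x y z : R) : brkt (x + y) z = brkt x z + brkt y z := by
  simp only [brkt, add_mul, mul_add]; abel

lemma brkt_eq_zero {u : R} (hu : IsC u) (y : R) : brkt u y = 0 := by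
  simp [brkt, hu y]

lemma brkt_mul_left {u : R} (hu : IsC u) (v w : R) : brkt (u * v) w = u * brkt v w := by
  simp only [brkt, mul_sub]
  rw [← mul_assoc w u v, ← hu w, mul_assoc, mul_assoc]

lemma ofFn_cast {α : Type*} {m n : ℕ} (h : m = n) (f : ℕ → α) :
    (List.ofFn fun i : Fin m => f i) = (List.ofFn fun i : Fin n => f i) := by subst h; rfl

lemma ofFn_concat {α : Type*} (f : ℕ → α) (n : ℕ) :
    (List.ofFn fun i : Fin (n + 1) => f i) = (List.ofFn fun i : Fin n => f i) ++ [f n] := by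
  rw [List.ofFn_succ']; simp [List.concat_eq_append]

lemma prod_ofFn_concat {M : Type*} [Monoid M] (f : ℕ → M) (n : ℕ) :
    (List.ofFn fun i : Fin (n + 1) => f i).prod
      = (List.ofFn fun i : Fin n => f i).prod * f n := by
  rw [ofFn_concat, List.prod_append, List.prod_singleton]

lemma IsC.prod_ofFn {f : ℕ → R} (hf : ∀ i, IsC (f i)) (n : ℕ) :
    IsC (List.ofFn fun i : Fin n => f i).prod := by
  induction n with
  | zero => simpa using IsC.one
  | succ n ih => rw [prod_ofFn_concat]; exact ih.mul (hf n)

lemma lnc_append (a : R) (l l' : List R) : (l ++ l').foldl (fun x y => x * y - y * x) a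
    = l'.foldl (fun x y => x * y - y * x) (l.foldl (fun x y => x * y - y * x) a) :=
  List.foldl_append ..

end ring

lemma brkt_tmul (F : Type*) [Field F] {G H : Type*} [Ring G] [Ring H] [Algebra F G] [Algebra F H]
    (a c : G) (b d : H) :
    brkt (a ⊗ₜ[F] b) (c ⊗ₜ[F] d) = (brkt a c) ⊗ₜ[F] (b * d) + (c * a) ⊗ₜ[F] (brkt b d) := by
  simp only [brkt, Algebra.TensorProduct.tmul_mul_tmul, TensorProduct.sub_tmul,
    TensorProduct.tmul_sub]
  abel

lemma step (F : Type*) [Field F] (G H : Type*) [Ring G] [Ring H] [Algebra F G] [Algebra F H]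
    (hG : ∀ a b : G, IsC (brkt a b)) (hH : ∀ a b : H, IsC (brkt a b))
    (A : G) (B hb : H) (C gb : G) (D : H)
    (hA : IsC A) (hB : IsC B) (hC : IsC C) (hD : IsC D)
    (g' g'' : G) (h' h'' : H) :
    brkt (brkt (A ⊗ₜ[F] (B * hb) + (C * gb) ⊗ₜ[F] D) (g' ⊗ₜ[F] h')) (g'' ⊗ₜ[F] h'')
      = (A * brkt g' g'') ⊗ₜ[F] (B * brkt hb h' * h'')
        + (C * brkt gb g' * g'') ⊗ₜ[F] (D * brkt h' h'') := by
  rw [brkt_add_left, brkt_tmul, brkt_tmul, brkt_eq_zero hA, brkt_eq_zero hD,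
    TensorProduct.zero_tmul, TensorProduct.tmul_zero, zero_add, add_zero,
    brkt_mul_left hB, brkt_mul_left hC, ← hA g',
    brkt_add_left, brkt_tmul, brkt_tmul,
    brkt_mul_left hA, brkt_eq_zero (hB.mul (hH hb h')),
    brkt_eq_zero (hC.mul (hG gb g')),
    TensorProduct.zero_tmul, TensorProduct.tmul_zero, zero_add, add_zero,
    brkt_mul_left hD, ← (hC.mul (hG gb g')) g'']

lemma lnc_singleton {A : Type*} [Ring A] (a x : A) : lnc a [x] = brkt a x := rfl

lemma lnc_app {A : Type*} [Ring A] (a : A) (l l' : List A) :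
    lnc a (l ++ l') = lnc (lnc a l) l' := List.foldl_append ..

lemma aux_main (F : Type*) [Field F] (G H : Type*) [Ring G] [Ring H] [Algebra F G] [Algebra F H]
    (hG : ∀ a b : G, IsC (brkt a b)) (hH : ∀ a b : H, IsC (brkt a b))
    (g : ℕ → G) (h : ℕ → H) (m : ℕ) :
    lnc ((g 1) ⊗ₜ[F] (h 1))
        (List.ofFn fun i : Fin (2 * m + 3) => (g (i + 2)) ⊗ₜ[F] (h (i + 2)))
      = ((List.ofFn fun s : Fin (m + 2) => brkt (g (2 * s + 1)) (g (2 * s + 2))).prod)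
          ⊗ₜ[F]
        (brkt (h 1 * h 2) (h 3) *
          (List.ofFn fun s : Fin m => brkt (h (2 * s + 4)) (h (2 * s + 5))).prod * h (2 * m + 4))
      + (brkt (g 2 * g 1) (g 3) *
          (List.ofFn fun s : Fin m => brkt (g (2 * s + 4)) (g (2 * s + 5))).prod * g (2 * m + 4))
          ⊗ₜ[F]
        ((List.ofFn fun s : Fin (m + 2) => brkt (h (2 * s + 1)) (h (2 * s + 2))).prod) := by
  induction m with
  | zero =>
      have hlist : (List.ofFn fun i : Fin (2 * 0 + 3) => (g (i + 2)) ⊗ₜ[F] (h (i + 2)))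
          = [g 2 ⊗ₜ[F] h 2, g 3 ⊗ₜ[F] h 3, g 4 ⊗ₜ[F] h 4] := by
        norm_num [List.ofFn_succ]
      rw [hlist]
      show brkt (brkt (brkt ((g 1) ⊗ₜ[F] (h 1)) (g 2 ⊗ₜ[F] h 2)) (g 3 ⊗ₜ[F] h 3)) (g 4 ⊗ₜ[F] h 4) = _
      rw [brkt_tmul]
      have hstep := step F G H hG hH (brkt (g 1) (g 2)) 1 (h 1 * h 2) 1 (g 2 * g 1)
        (brkt (h 1) (h 2)) (hG _ _) IsC.one IsC.one (hH _ _) (g 3) (g 4) (h 3) (h 4)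
      rw [one_mul, one_mul, one_mul, one_mul] at hstep
      rw [hstep]
      norm_num [List.ofFn_succ, mul_assoc]
  | succ m ih =>
      have hlist : (List.ofFn fun i : Fin (2 * (m + 1) + 3) => (g (i + 2)) ⊗ₜ[F] (h (i + 2)))
          = (List.ofFn fun i : Fin (2 * m + 3) => (g (i + 2)) ⊗ₜ[F] (h (i + 2)))
            ++ [g (2 * m + 5) ⊗ₜ[F] h (2 * m + 5)] ++ [g (2 * m + 6) ⊗ₜ[F] h (2 * m + 6)] := by
        rw [ofFn_cast (show 2 * (m + 1) + 3 = (2 * m + 3 + 1) + 1 by omega)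
            (fun j => (g (j + 2)) ⊗ₜ[F] (h (j + 2))),
          ofFn_concat (fun j => (g (j + 2)) ⊗ₜ[F] (h (j + 2))) (2 * m + 3 + 1),
          ofFn_concat (fun j => (g (j + 2)) ⊗ₜ[F] (h (j + 2))) (2 * m + 3)]
      rw [hlist, lnc_app, lnc_app, ih, lnc_singleton, lnc_singleton]
      rw [step F G H hG hH
        ((List.ofFn fun s : Fin (m + 2) => brkt (g (2 * s + 1)) (g (2 * s + 2))).prod)
        (brkt (h 1 * h 2) (h 3) * (List.ofFn fun s : Fin m => brkt (h (2 * s + 4)) (h (2 * s + 5))).prod)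
        (h (2 * m + 4))
        (brkt (g 2 * g 1) (g 3) * (List.ofFn fun s : Fin m => brkt (g (2 * s + 4)) (g (2 * s + 5))).prod)
        (g (2 * m + 4))
        ((List.ofFn fun s : Fin (m + 2) => brkt (h (2 * s + 1)) (h (2 * s + 2))).prod)
        (IsC.prod_ofFn (fun i => hG (g (2 * i + 1)) (g (2 * i + 2))) (m + 2))
        ((hH (h 1 * h 2) (h 3)).mul (IsC.prod_ofFn (fun i => hH (h (2 * i + 4)) (h (2 * i + 5))) m))
        ((hG (g 2 * g 1) (g 3)).mul (IsC.prod_ofFn (fun i => hG (g (2 * i + 4)) (g (2 * i + 5))) m))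
        (IsC.prod_ofFn (fun i => hH (h (2 * i + 1)) (h (2 * i + 2))) (m + 2))
        (g (2 * m + 5)) (g (2 * m + 6)) (h (2 * m + 5)) (h (2 * m + 6))]
      rw [ofFn_cast (show m + 1 + 2 = (m + 2) + 1 by omega)
          (fun j => brkt (g (2 * j + 1)) (g (2 * j + 2))),
        prod_ofFn_concat (fun j => brkt (g (2 * j + 1)) (g (2 * j + 2))) (m + 2),
        ofFn_cast (show m + 1 + 2 = (m + 2) + 1 by omega)
          (fun j => brkt (h (2 * j + 1)) (h (2 * j + 2))),
        prod_ofFn_concat (fun j => brkt (h (2 * j + 1)) (h (2 * j + 2))) (m + 2),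
        prod_ofFn_concat (fun j => brkt (h (2 * j + 4)) (h (2 * j + 5))) m,
        prod_ofFn_concat (fun j => brkt (g (2 * j + 4)) (g (2 * j + 5))) m]
      norm_num [show 2 * (m + 2) + 1 = 2 * m + 5 by omega, show 2 * (m + 2) + 2 = 2 * m + 6 by omega,
        show 2 * m + 4 + 1 = 2 * m + 5 by omega, show 2 * (m + 1) + 4 = 2 * m + 6 by omega,
        mul_assoc]

/-- formula for the left-normed commutator of even length `2k` (`k > 1`)
of elementary tensors in `G ⊗ H`, for `G`, `H` Lie nilpotent of class at most 2. -/
theorem tensor_lnc_even_formula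
    (F : Type*) [Field F] (G H : Type*) [Ring G] [Ring H] [Algebra F G] [Algebra F H]
    (hG : ∀ g1 g2 g3 : G, (g1 * g2 - g2 * g1) * g3 - g3 * (g1 * g2 - g2 * g1) = 0)
    (hH : ∀ h1 h2 h3 : H, (h1 * h2 - h2 * h1) * h3 - h3 * (h1 * h2 - h2 * h1) = 0)
    (k : ℕ) (hk : 1 < k) (g : ℕ → G) (h : ℕ → H) :
    lnc ((g 1) ⊗ₜ[F] (h 1)) (List.ofFn fun i : Fin (2 * k - 1) => (g (i + 2)) ⊗ₜ[F] (h (i + 2)))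
      = ((List.ofFn fun s : Fin k =>
            g (2 * s + 1) * g (2 * s + 2) - g (2 * s + 2) * g (2 * s + 1)).prod)
          ⊗ₜ[F]
        ((h 1 * h 2 * h 3 - h 3 * (h 1 * h 2)) *
          (List.ofFn fun s : Fin (k - 2) =>
            h (2 * s + 4) * h (2 * s + 5) - h (2 * s + 5) * h (2 * s + 4)).prod * h (2 * k))
      + ((g 2 * g 1 * g 3 - g 3 * (g 2 * g 1)) *
          (List.ofFn fun s : Fin (k - 2) =>
            g (2 * s + 4) * g (2 * s + 5) - g (2 * s + 5) * g (2 * s + 4)).prod * g (2 * k))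
          ⊗ₜ[F]
        ((List.ofFn fun s : Fin k =>
            h (2 * s + 1) * h (2 * s + 2) - h (2 * s + 2) * h (2 * s + 1)).prod) := by
  obtain ⟨m, rfl⟩ : ∃ m, k = m + 2 := ⟨k - 2, by omega⟩
  have hG' : ∀ a b : G, IsC (brkt a b) := fun a b y => sub_eq_zero.mp (hG a b y)
  have hH' : ∀ a b : H, IsC (brkt a b) := fun a b y => sub_eq_zero.mp (hH a b y)
  have key := aux_main F G H hG' hH' g h m
  rw [ofFn_cast (show 2 * m + 3 = 2 * (m + 2) - 1 by omega)
      (fun j => (g (j + 2)) ⊗ₜ[F] (h (j + 2))),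
    ofFn_cast (show m = m + 2 - 2 by omega) (fun j => brkt (h (2 * j + 4)) (h (2 * j + 5))),
    ofFn_cast (show m = m + 2 - 2 by omega) (fun j => brkt (g (2 * j + 4)) (g (2 * j + 5))),
    show 2 * m + 4 = 2 * (m + 2) by omega] at key
  exact key
end

section
/- Let G and H be unital associative F-algebras that are Lie nilpotent of class at most 2, and suppose that [f1,f2][f3,f4]···[f_{2k-1},f_{2k}] = 0 for all f1,...,f_{2k} ∈ H. Then G ⊗ H is Lie nilpotent of class at most 2k, i.e. [u1, u2, ..., u_{2k+1}] = 0 for all ui ∈ G ⊗ H. -/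
/-!
Commutators of `G` and of `H` are central, so the span `Z` of the tensors `[a, b] ⊗ [c, d]` is a
central subspace of `A = G ⊗ H`. The identity `[g ⊗ h, g' ⊗ h'] = [g, g'] ⊗ hh' + g'g ⊗ [h, h']`
shows that every double commutator `[[r, u], w]` lies in the ideal `Z A`; as `Z` is central, each
further pair of brackets pushes a left-normed commutator one power deeper:
`[[Z^m A, u], w] ⊆ Z^(m+1) A`. Finally `Z^k = 0`, because a product of `k` generators of `Z` is
`g ⊗ (product of k commutators of H)`.
-/

open scoped TensorProduct

theorem Submodule.pow_le_toSubmodule_of_le {R A : Type*} [CommSemiring R] [Semiring A] [Algebra R A]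
    {S : Subalgebra R A} {Z : Submodule R A} (hZ : Z ≤ Subalgebra.toSubmodule S) (m : ℕ) :
    Z ^ m ≤ Subalgebra.toSubmodule S := by
  induction m with
  | zero => exact Submodule.one_le.mpr S.one_mem
  | succ m ih =>
    rw [pow_succ]
    exact (mul_le_mul' ih hZ).trans S.isIdempotentElem_toSubmodule.le

section LieNilpotent

attribute [local instance] LieRing.ofAssociativeRing

variable {R A : Type*} [CommRing R] [Ring A] [Algebra R A] {Z : Submodule R A}

theorem lie_lie_mem_pow_succ_mul_top (hZ : Z ≤ Subalgebra.toSubmodule (Subalgebra.center R A))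
    (hlie : ∀ r u w : A, ⁅⁅r, u⁆, w⁆ ∈ Z * ⊤) {m : ℕ} {a : A} (ha : a ∈ Z ^ m * ⊤) (u w : A) :
    ⁅⁅a, u⁆, w⁆ ∈ Z ^ (m + 1) * ⊤ := by
  induction ha using Submodule.mul_induction_on' with
  | mem_mul_mem z hz r _ =>
    have hcen :=
      (Subalgebra.mem_center_iff (R := R)).mp (Submodule.pow_le_toSubmodule_of_le hZ m hz)
    have hpull : ∀ x y : A, ⁅z * x, y⁆ = z * ⁅x, y⁆ := fun x y => by
      rw [Ring.lie_def, Ring.lie_def, mul_sub, ← mul_assoc z y, ← hcen y, mul_assoc z, mul_assoc y]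
    rw [hpull, hpull, pow_succ, mul_assoc]
    exact Submodule.mul_mem_mul hz (hlie r u w)
  | add x _ y _ hx hy => rw [add_lie, add_lie]; exact add_mem hx hy

theorem lnc_mem_pow_mul_top (hZ : Z ≤ Subalgebra.toSubmodule (Subalgebra.center R A))
    (hlie : ∀ r u w : A, ⁅⁅r, u⁆, w⁆ ∈ Z * ⊤) {n : ℕ} :
    ∀ {m : ℕ} {a : A} (l : List A), a ∈ Z ^ m * ⊤ → l.length = 2 * n →
      lnc a l ∈ Z ^ (m + n) * ⊤ := by
  induction n with
  | zero =>
    intro m a l ha hl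
    rwa [List.eq_nil_of_length_eq_zero hl]
  | succ n ih =>
    intro m a l ha hl
    match l, hl with
    | u :: w :: l, hl =>
      rw [show m + (n + 1) = m + 1 + n by omega]
      exact ih l (lie_lie_mem_pow_succ_mul_top hZ hlie ha u w) (by simpa [mul_add] using hl)

end LieNilpotent

section TensorProduct

attribute [local instance] LieRing.ofAssociativeRing

variable {R G H : Type*} [CommRing R] [Ring G] [Ring H] [Algebra R G] [Algebra R H]

theorem lie_mem_center (hG : ∀ a b c : G, ⁅⁅a, b⁆, c⁆ = 0) (a b : G) :
    ⁅a, b⁆ ∈ Subalgebra.center R G :=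
  Subalgebra.mem_center_iff.mpr fun c => (sub_eq_zero.mp (hG a b c)).symm

theorem Algebra.TensorProduct.tmul_mem_center {c : G} {d : H} (hc : c ∈ Subalgebra.center R G)
    (hd : d ∈ Subalgebra.center R H) : c ⊗ₜ[R] d ∈ Subalgebra.center R (G ⊗[R] H) := by
  rw [Subalgebra.mem_center_iff] at *
  intro t
  induction t using TensorProduct.induction_on with
  | zero => simp
  | tmul g h => simp only [Algebra.TensorProduct.tmul_mul_tmul, hc, hd]
  | add x y hx hy => rw [add_mul, mul_add, hx, hy]

theorem Algebra.TensorProduct.lie_tmul_tmul (g g' : G) (h h' : H) :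
    ⁅g ⊗ₜ[R] h, g' ⊗ₜ[R] h'⁆ = ⁅g, g'⁆ ⊗ₜ (h * h') + (g' * g) ⊗ₜ ⁅h, h'⁆ := by
  simp only [Ring.lie_def, Algebra.TensorProduct.tmul_mul_tmul, TensorProduct.sub_tmul,
    TensorProduct.tmul_sub]
  abel

variable (R G H) in
def commutatorTensorSpan : Submodule R (G ⊗[R] H) :=
  Submodule.span R {x | ∃ (a b : G) (c d : H), x = ⁅a, b⁆ ⊗ₜ ⁅c, d⁆}

theorem commutatorTensorSpan_le_center (hG : ∀ a b c : G, ⁅⁅a, b⁆, c⁆ = 0)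
    (hH : ∀ a b c : H, ⁅⁅a, b⁆, c⁆ = 0) :
    commutatorTensorSpan R G H ≤ Subalgebra.toSubmodule (Subalgebra.center R (G ⊗[R] H)) :=
  Submodule.span_le.mpr fun _ ⟨a, b, c, d, hx⟩ =>
    hx ▸ Algebra.TensorProduct.tmul_mem_center (lie_mem_center hG a b) (lie_mem_center hH c d)

theorem lie_commutator_tmul_mem_commutatorTensorSpan_mul_top (hG : ∀ a b c : G, ⁅⁅a, b⁆, c⁆ = 0)
    (a b : G) (h : H) (w : G ⊗[R] H) :
    ⁅⁅a, b⁆ ⊗ₜ[R] h, w⁆ ∈ commutatorTensorSpan R G H * ⊤ := by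
  induction w using TensorProduct.induction_on with
  | zero => simp
  | add x y hx hy => rw [lie_add]; exact add_mem hx hy
  | tmul g' h' =>
    have hcen := Subalgebra.mem_center_iff.mp (lie_mem_center (R := R) hG a b)
    have key : ⁅⁅a, b⁆ ⊗ₜ[R] h, g' ⊗ₜ[R] h'⁆ = (⁅a, b⁆ ⊗ₜ ⁅h, h'⁆) * (g' ⊗ₜ (1 : H)) := by
      rw [Algebra.TensorProduct.lie_tmul_tmul, hG, TensorProduct.zero_tmul, zero_add,
        Algebra.TensorProduct.tmul_mul_tmul, mul_one, hcen g']
    rw [key]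
    exact Submodule.mul_mem_mul (Submodule.subset_span ⟨a, b, h, h', rfl⟩) trivial

theorem lie_tmul_commutator_mem_commutatorTensorSpan_mul_top (hH : ∀ a b c : H, ⁅⁅a, b⁆, c⁆ = 0)
    (g : G) (c d : H) (w : G ⊗[R] H) :
    ⁅g ⊗ₜ[R] ⁅c, d⁆, w⁆ ∈ commutatorTensorSpan R G H * ⊤ := by
  induction w using TensorProduct.induction_on with
  | zero => simp
  | add x y hx hy => rw [lie_add]; exact add_mem hx hy
  | tmul g' h' =>
    have key : ⁅g ⊗ₜ[R] ⁅c, d⁆, g' ⊗ₜ[R] h'⁆ = (⁅g, g'⁆ ⊗ₜ ⁅c, d⁆) * ((1 : G) ⊗ₜ h') := by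
      rw [Algebra.TensorProduct.lie_tmul_tmul, hH, TensorProduct.tmul_zero, add_zero,
        Algebra.TensorProduct.tmul_mul_tmul, mul_one]
    rw [key]
    exact Submodule.mul_mem_mul (Submodule.subset_span ⟨g, g', c, d, rfl⟩) trivial

theorem lie_lie_mem_commutatorTensorSpan_mul_top (hG : ∀ a b c : G, ⁅⁅a, b⁆, c⁆ = 0)
    (hH : ∀ a b c : H, ⁅⁅a, b⁆, c⁆ = 0) (r u w : G ⊗[R] H) :
    ⁅⁅r, u⁆, w⁆ ∈ commutatorTensorSpan R G H * ⊤ := by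
  induction r using TensorProduct.induction_on with
  | zero => simp
  | add x y hx hy => rw [add_lie, add_lie]; exact add_mem hx hy
  | tmul g h =>
    induction u using TensorProduct.induction_on with
    | zero => simp
    | add x y hx hy => rw [lie_add, add_lie]; exact add_mem hx hy
    | tmul g' h' =>
      rw [Algebra.TensorProduct.lie_tmul_tmul, add_lie]
      exact add_mem (lie_commutator_tmul_mem_commutatorTensorSpan_mul_top hG g g' _ w)
        (lie_tmul_commutator_mem_commutatorTensorSpan_mul_top hH _ h h' w)

def commutatorProd (f : ℕ → H) (n : ℕ) : H :=
  (List.ofFn fun s : Fin n => ⁅f (2 * s + 1), f (2 * s + 2)⁆).prod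

theorem commutatorProd_succ (f : ℕ → H) (n : ℕ) :
    commutatorProd f (n + 1) = commutatorProd f n * ⁅f (2 * n + 1), f (2 * n + 2)⁆ := by
  rw [commutatorProd, commutatorProd, List.ofFn_succ', List.prod_concat]
  rfl

theorem exists_commutatorProd_succ_eq_mul (f : ℕ → H) (n : ℕ) (c d : H) :
    ∃ f' : ℕ → H, commutatorProd f' (n + 1) = commutatorProd f n * ⁅c, d⁆ := by
  refine ⟨fun i => if i ≤ 2 * n then f i else if i = 2 * n + 1 then c else d, ?_⟩
  have hlow (s : Fin n) : 2 * (s : ℕ) + 1 ≤ 2 * n ∧ 2 * (s : ℕ) + 2 ≤ 2 * n := by omega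
  rw [commutatorProd_succ]
  simp only [commutatorProd, hlow, if_true]
  simp

theorem commutatorTensorSpan_pow_le (n : ℕ) :
    commutatorTensorSpan R G H ^ n ≤
      Submodule.span R {x | ∃ (g : G) (f : ℕ → H), x = g ⊗ₜ commutatorProd f n} := by
  induction n with
  | zero =>
    exact Submodule.one_le.mpr
      (Submodule.subset_span ⟨1, 0, by simp [commutatorProd, Algebra.TensorProduct.one_def]⟩)
  | succ n ih =>
    rw [pow_succ]
    refine (mul_le_mul' ih le_rfl).trans ?_
    rw [commutatorTensorSpan, Submodule.span_mul_span]
    refine Submodule.span_mono ?_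
    rintro _ ⟨_, ⟨g, f, rfl⟩, _, ⟨a, b, c, d, rfl⟩, rfl⟩
    obtain ⟨f', hf'⟩ := exists_commutatorProd_succ_eq_mul f n c d
    exact ⟨g * ⁅a, b⁆, f', by rw [hf']; exact Algebra.TensorProduct.tmul_mul_tmul _ _ _ _⟩

theorem commutatorTensorSpan_pow_eq_bot {k : ℕ} (hprod : ∀ f : ℕ → H, commutatorProd f k = 0) :
    commutatorTensorSpan R G H ^ k = ⊥ := by
  refine eq_bot_iff.mpr ((commutatorTensorSpan_pow_le k).trans (Submodule.span_le.mpr ?_))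
  rintro _ ⟨g, f, rfl⟩
  simp [hprod f]

end TensorProduct

theorem tensor_lieNilpotent_of_prod_commutators_eq_zero_general
    (F : Type*) [Field F] (G H : Type*) [Ring G] [Ring H] [Algebra F G] [Algebra F H]
    (hG : ∀ g1 g2 g3 : G, (g1 * g2 - g2 * g1) * g3 - g3 * (g1 * g2 - g2 * g1) = 0)
    (hH : ∀ h1 h2 h3 : H, (h1 * h2 - h2 * h1) * h3 - h3 * (h1 * h2 - h2 * h1) = 0)
    (k : ℕ)
    (hprod : ∀ f : ℕ → H,
      (List.ofFn fun s : Fin k =>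
        f (2 * s + 1) * f (2 * s + 2) - f (2 * s + 2) * f (2 * s + 1)).prod = 0) :
    ∀ u : ℕ → TensorProduct F G H,
      lnc (u 1) (List.ofFn fun i : Fin (2 * k) => u (i + 2)) = 0 := by
  intro u
  have hZ := commutatorTensorSpan_le_center (R := F) hG hH
  have hlie := lie_lie_mem_commutatorTensorSpan_mul_top (R := F) hG hH
  have hZk := commutatorTensorSpan_pow_eq_bot (R := F) (G := G) hprod
  have h0 : u 1 ∈ commutatorTensorSpan F G H ^ 0 * ⊤ := by simp
  have hmem := lnc_mem_pow_mul_top hZ hlie (List.ofFn fun i : Fin (2 * k) => u (i + 2)) h0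
    List.length_ofFn
  rwa [zero_add, hZk, Submodule.bot_mul, Submodule.mem_bot] at hmem

/-- if `G`, `H` are Lie nilpotent of class at most 2 and every product
of `k` commutators `[f1,f2]⋯[f_{2k-1},f_{2k}]` vanishes in `H`, then `G ⊗ H` is
Lie nilpotent of class at most `2k`. -/
theorem tensor_lieNilpotent_of_prod_commutators_eq_zero
    (F : Type*) [Field F] (G H : Type*) [Ring G] [Ring H] [Algebra F G] [Algebra F H]
    (hG : ∀ g1 g2 g3 : G, (g1 * g2 - g2 * g1) * g3 - g3 * (g1 * g2 - g2 * g1) = 0)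
    (hH : ∀ h1 h2 h3 : H, (h1 * h2 - h2 * h1) * h3 - h3 * (h1 * h2 - h2 * h1) = 0)
    (k : ℕ) (hk : 1 ≤ k)
    (hprod : ∀ f : ℕ → H,
      (List.ofFn fun s : Fin k =>
        f (2 * s + 1) * f (2 * s + 2) - f (2 * s + 2) * f (2 * s + 1)).prod = 0) :
    ∀ u : ℕ → TensorProduct F G H,
      lnc (u 1) (List.ofFn fun i : Fin (2 * k) => u (i + 2)) = 0 :=
  tensor_lieNilpotent_of_prod_commutators_eq_zero_general F G H hG hH k hprod
end

section
/- Let E_r be the r-generated unital Grassmann algebra over a field of characteristic ≠ 2, and let k satisfy 2k > r. Then [f1,f2][f3,f4]···[f_{2k-1},f_{2k}] = 0 for all f1,...,f_{2k} ∈ E_r. -/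
/-- The `i`-th generator of the Grassmann algebra `E = Λ(F^{(ℕ)})`. -/
noncomputable def grassmannGen (F : Type*) [Field F] (i : ℕ) :
    ExteriorAlgebra F (ℕ →₀ F) :=
  ExteriorAlgebra.ι F (Finsupp.single i 1)

/-!
Let `V` be the span of the first `r` generators and filter `E` by `S_d = ⨆ n, V ^ (d + n)`, the
span of the products of at least `d` generators. Then `E_r ⊆ S_0 = F + S_1`; since scalars are
central, the commutator of two elements of `E_r` is a commutator of two elements of `S_1`, hence
lies in `S_2`. A product of `k` commutators therefore lies in `S_{2k}`. Finally `V ^ n = 0` for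
`n > r`: a product of `n` generators with indices `< r` repeats a generator, and the wedge product
is alternating. So `S_{2k} = 0` as soon as `2k > r`.
-/

namespace Submodule

section Semiring

variable {R A : Type*} [CommSemiring R] [Semiring A] [Algebra R A] (V : Submodule R A)

def iSupPowFrom (d : ℕ) : Submodule R A := ⨆ n, V ^ (d + n)

variable {V}

theorem pow_le_iSupPowFrom {d n : ℕ} (h : d ≤ n) : V ^ n ≤ V.iSupPowFrom d :=
  le_iSup_of_le (n - d) (by rw [Nat.add_sub_cancel' h])

theorem iSupPowFrom_mul_le (a b : ℕ) :
    V.iSupPowFrom a * V.iSupPowFrom b ≤ V.iSupPowFrom (a + b) := by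
  rw [iSupPowFrom, iSup_mul]
  refine iSup_le fun m => ?_
  rw [iSupPowFrom, mul_iSup]
  refine iSup_le fun n => ?_
  rw [← pow_add]
  exact pow_le_iSupPowFrom (by omega)

theorem iSupPowFrom_eq_bot_of_pow_eq_bot {d : ℕ} (h : V ^ d = ⊥) : V.iSupPowFrom d = ⊥ :=
  iSup_eq_bot.2 fun n => by rw [pow_add, h, bot_mul]

theorem list_prod_mem_iSupPowFrom {d : ℕ} {L : List A} (h : ∀ x ∈ L, x ∈ V.iSupPowFrom d) :
    L.prod ∈ V.iSupPowFrom (d * L.length) := by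
  induction L with
  | nil => exact pow_le_iSupPowFrom le_rfl (one_le.1 le_rfl)
  | cons x L ih =>
    rw [List.prod_cons, List.length_cons, Nat.mul_succ, add_comm]
    exact iSupPowFrom_mul_le _ _ (mul_mem_mul (h x List.mem_cons_self)
      (ih fun y hy => h y (List.mem_cons_of_mem x hy)))

theorem iSupPowFrom_zero_le : V.iSupPowFrom 0 ≤ 1 ⊔ V.iSupPowFrom 1 :=
  iSup_le fun
    | 0 => le_sup_left
    | n + 1 => le_sup_of_le_right (pow_le_iSupPowFrom (by omega))

theorem adjoin_le_iSupPowFrom_span_zero (s : Set A) :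
    Subalgebra.toSubmodule (Algebra.adjoin R s) ≤ (span R s).iSupPowFrom 0 := by
  have h_one : (1 : A) ∈ (span R s).iSupPowFrom 0 := pow_le_iSupPowFrom le_rfl (one_le.1 le_rfl)
  have h_mul {x y : A} (hx : x ∈ (span R s).iSupPowFrom 0) (hy : y ∈ (span R s).iSupPowFrom 0) :
      x * y ∈ (span R s).iSupPowFrom 0 :=
    iSupPowFrom_mul_le 0 0 (mul_mem_mul hx hy)
  rw [← toSubalgebra_toSubmodule _ h_one @h_mul, Subalgebra.toSubmodule.le_iff_le]
  exact Algebra.adjoin_le fun x hx =>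
    pow_le_iSupPowFrom (Nat.zero_le 1) (by rw [pow_one]; exact subset_span hx)

end Semiring

section Ring

variable {R A : Type*} [CommRing R] [Ring A] [Algebra R A] {V : Submodule R A}

theorem commutator_mem_iSupPowFrom_two {x y : A} (hx : x ∈ V.iSupPowFrom 0)
    (hy : y ∈ V.iSupPowFrom 0) : x * y - y * x ∈ V.iSupPowFrom 2 := by
  obtain ⟨_, ha, x₁, hx₁, rfl⟩ := mem_sup.1 (iSupPowFrom_zero_le hx)
  obtain ⟨_, hb, y₁, hy₁, rfl⟩ := mem_sup.1 (iSupPowFrom_zero_le hy)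
  obtain ⟨a, rfl⟩ := mem_one.1 ha
  obtain ⟨b, rfl⟩ := mem_one.1 hb
  have hcomm (c : R) (z : A) : algebraMap R A c * z - z * algebraMap R A c = 0 :=
    sub_eq_zero.2 (Algebra.commutes c z)
  have key : (algebraMap R A a + x₁) * (algebraMap R A b + y₁)
      - (algebraMap R A b + y₁) * (algebraMap R A a + x₁) = x₁ * y₁ - y₁ * x₁ := by
    calc _ = (algebraMap R A a * algebraMap R A b - algebraMap R A b * algebraMap R A a)
          + (algebraMap R A a * y₁ - y₁ * algebraMap R A a)
          - (algebraMap R A b * x₁ - x₁ * algebraMap R A b) + (x₁ * y₁ - y₁ * x₁) := by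
          noncomm_ring
      _ = x₁ * y₁ - y₁ * x₁ := by simp only [hcomm, zero_add, sub_zero]
  rw [key]
  exact sub_mem (iSupPowFrom_mul_le 1 1 (mul_mem_mul hx₁ hy₁))
    (iSupPowFrom_mul_le 1 1 (mul_mem_mul hy₁ hx₁))

end Ring

end Submodule

open Submodule

theorem span_grassmannGen_pow_eq_bot (F : Type*) [Field F] {r n : ℕ} (h : r < n) :
    span F {x | ∃ i < r, x = grassmannGen F i} ^ n = ⊥ := by
  rw [span_pow, span_eq_bot]
  rintro _ hx
  obtain ⟨g, rfl⟩ := Set.mem_pow.1 hx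
  choose i hi hgi using fun j => (g j).2
  obtain ⟨j, j', hne, heq⟩ :=
    Fintype.exists_ne_map_eq_of_card_lt (fun j => (⟨i j, hi j⟩ : Fin r)) (by simpa using h)
  have hprod : (List.ofFn fun j => (g j : ExteriorAlgebra F (ℕ →₀ F))) =
      List.ofFn fun j => ExteriorAlgebra.ι F (Finsupp.single (i j) 1) :=
    congrArg List.ofFn (funext hgi)
  rw [hprod, ← ExteriorAlgebra.ιMulti_apply]
  exact AlternatingMap.map_eq_zero_of_eq _ _ (by rw [Fin.mk.inj_iff.1 heq]) hne

theorem grassmann_Er_prod_commutators_eq_zero_general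
    (F : Type*) [Field F] (r k : ℕ) (hrk : r < 2 * k)
    (f : ℕ → ExteriorAlgebra F (ℕ →₀ F))
    (hf : ∀ s, 1 ≤ s → s ≤ 2 * k →
      f s ∈ Algebra.adjoin F {x | ∃ i < r, x = grassmannGen F i}) :
    (List.ofFn fun s : Fin k =>
      f (2 * s + 1) * f (2 * s + 2) - f (2 * s + 2) * f (2 * s + 1)).prod = 0 := by
  have hE_r (s : ℕ) (h1 : 1 ≤ s) (h2 : s ≤ 2 * k) :=
    adjoin_le_iSupPowFrom_span_zero _ (hf s h1 h2)
  have hprod := list_prod_mem_iSupPowFrom (d := 2) (L := List.ofFn fun s : Fin k =>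
      f (2 * s + 1) * f (2 * s + 2) - f (2 * s + 2) * f (2 * s + 1)) <| by
    simp only [List.forall_mem_ofFn_iff]
    intro s
    exact commutator_mem_iSupPowFrom_two (hE_r _ (by omega) (by omega))
      (hE_r _ (by omega) (by omega))
  rwa [List.length_ofFn, iSupPowFrom_eq_bot_of_pow_eq_bot (span_grassmannGen_pow_eq_bot F hrk),
    mem_bot] at hprod

/-- in the `r`-generated Grassmann algebra `E_r` (the unital subalgebra of
`E` generated by the first `r` generators) over a field of characteristic ≠ 2, if
`2k > r` then any product `[f1,f2][f3,f4]⋯[f_{2k-1},f_{2k}]` of `k` commutators of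
elements of `E_r` vanishes. -/
theorem grassmann_Er_prod_commutators_eq_zero
    (F : Type*) [Field F] (h2 : (2 : F) ≠ 0) (r k : ℕ) (hrk : r < 2 * k)
    (f : ℕ → ExteriorAlgebra F (ℕ →₀ F))
    (hf : ∀ s, 1 ≤ s → s ≤ 2 * k →
      f s ∈ Algebra.adjoin F {x | ∃ i < r, x = grassmannGen F i}) :
    (List.ofFn fun s : Fin k =>
      f (2 * s + 1) * f (2 * s + 2) - f (2 * s + 2) * f (2 * s + 1)).prod = 0 :=
  grassmann_Er_prod_commutators_eq_zero_general F r k hrk f hf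
end

section
/- Let 𝒢 be the group with generators yi (i ≥ 1) subject to yi² = 1 and ((yi,yj),yk) = 1. Every element a ∈ 𝒢 can be written uniquely as a = y_{i1}···y_{iq} (y_{j1},y_{j2})···(y_{j_{2q'-1}},y_{j_{2q'}}) with q, q' ≥ 0, i1 < ··· < iq, j_{2s-1} < j_{2s} for each s, and the pairs (j_{2s-1},j_{2s}) strictly increasing in a fixed linear order. -/
/-- The group commutator `(a,b) = a⁻¹ b⁻¹ a b`. -/
def gc {G : Type*} [Group G] (a b : G) : G := a⁻¹ * b⁻¹ * a * b

/-- The relations `yᵢ² = 1` and `((yᵢ,yⱼ),yₖ) = 1`. -/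
def grpRels : Set (FreeGroup ℕ) :=
  (Set.range fun i => FreeGroup.of i ^ 2) ∪
    {x | ∃ i j k, x = gc (gc (FreeGroup.of i) (FreeGroup.of j)) (FreeGroup.of k)}

/-- The group `𝒢` presented by generators `y₁, y₂, …` with relations `yᵢ² = 1`,
`((yᵢ,yⱼ),yₖ) = 1`. -/
def GrpG : Type := PresentedGroup grpRels

instance : Group GrpG := by unfold GrpG; infer_instance

/-- The generator `yᵢ` of `𝒢`. -/
def yy (i : ℕ) : GrpG := PresentedGroup.of i

/-!
In `𝒢` the commutators `c_{ij} = (y_i, y_j)` are central, so conjugating `c_{ij}` by `y_i = y_i⁻¹`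
shows `c_{ij} = c_{ji} = c_{ij}⁻¹`. Using `y_k y_j = y_j y_k c_{jk}` any word can therefore be
sorted into normal form: the generators are bubble-sorted and the central involutions `c_{jk}` this
produces are collected and sorted with cancellation.

For uniqueness, `𝒢` maps to the central extension of `V = 𝔽₂^ℕ` by `C = 𝔽₂^{ℕ×ℕ}` with the
cocycle `β(u, v)(i, j) = u_j v_i` for `i < j`. There `y_i ↦ (e_i, 0)`, an increasing product of
generators has trivial `C`-part, and `c_{ij} ↦ (0, e_{ij})`, so a normal form is read off from its
image.
-/

section Commutator

open scoped commutatorElement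

variable {G : Type*} [Group G]

lemma gc_eq_commutatorElement (a b : G) : gc a b = ⁅a⁻¹, b⁻¹⁆ := by
  simp [gc, commutatorElement_def]

lemma gc_eq_one_iff {a b : G} : gc a b = 1 ↔ Commute a b := by
  rw [gc_eq_commutatorElement, commutatorElement_eq_one_iff_commute, Commute.inv_inv_iff]

lemma gc_swap (a b : G) : gc b a = (gc a b)⁻¹ := by
  simp only [gc]; group

lemma mul_gc_mul_inv (a b : G) : a * gc a b * a⁻¹ = gc b a⁻¹ := by
  simp only [gc]; group

lemma map_gc {H : Type*} [Group H] (f : G →* H) (a b : G) : f (gc a b) = gc (f a) (f b) := by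
  simp [gc]

end Commutator

@[ext]
structure CentralExt {V C : Type*} [AddCommGroup V] [AddCommGroup C] (β : V →+ V →+ C) where
  u : V
  x : C

namespace CentralExt

variable {V C : Type*} [AddCommGroup V] [AddCommGroup C] {β : V →+ V →+ C}

instance : Mul (CentralExt β) := ⟨fun a b => ⟨a.u + b.u, a.x + b.x + β a.u b.u⟩⟩
instance : One (CentralExt β) := ⟨⟨0, 0⟩⟩
instance : Inv (CentralExt β) := ⟨fun a => ⟨-a.u, -a.x + β a.u a.u⟩⟩

@[simp] lemma mul_u (a b : CentralExt β) : (a * b).u = a.u + b.u := rfl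
@[simp] lemma mul_x (a b : CentralExt β) : (a * b).x = a.x + b.x + β a.u b.u := rfl
@[simp] lemma one_u : (1 : CentralExt β).u = 0 := rfl
@[simp] lemma one_x : (1 : CentralExt β).x = 0 := rfl
@[simp] lemma inv_u (a : CentralExt β) : a⁻¹.u = -a.u := rfl
@[simp] lemma inv_x (a : CentralExt β) : a⁻¹.x = -a.x + β a.u a.u := rfl

instance : Group (CentralExt β) where
  mul_assoc a b c := by
    ext <;> simp only [mul_u, mul_x, map_add, AddMonoidHom.add_apply] <;> abel
  one_mul a := by ext <;> simp
  mul_one a := by ext <;> simp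
  inv_mul_cancel a := by ext <;> simp

lemma gc_eq (a b : CentralExt β) : gc a b = ⟨0, β a.u b.u - β b.u a.u⟩ := by
  ext
  · simp [gc]
  · simp [gc]; abel

lemma commute_of_u_eq_zero {a : CentralExt β} (ha : a.u = 0) (b : CentralExt β) :
    Commute a b := by
  ext <;> simp [ha, add_comm]

lemma gc_gc_eq_one (a b c : CentralExt β) : gc (gc a b) c = 1 :=
  gc_eq_one_iff.mpr (commute_of_u_eq_zero (by simp [gc_eq]) c)

end CentralExt

section Model

def pairCocycle : (ℕ → ZMod 2) →+ (ℕ → ZMod 2) →+ (ℕ × ℕ → ZMod 2) :=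
  AddMonoidHom.mk' (fun u => AddMonoidHom.mk' (fun v p => if p.1 < p.2 then u p.2 * v p.1 else 0)
      fun v w => by funext p; split_ifs <;> simp [*, mul_add])
    fun u u' => by ext v p; simp only [AddMonoidHom.mk'_apply, Pi.add_apply,
      AddMonoidHom.add_apply]; split_ifs <;> simp [add_mul]

lemma pairCocycle_single_apply (i : ℕ) (v : ℕ → ZMod 2) (p : ℕ × ℕ) :
    pairCocycle (Pi.single i 1) v p = if p.2 = i ∧ p.1 < i then v p.1 else 0 := by
  simp only [pairCocycle, AddMonoidHom.mk'_apply, Pi.single_apply]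
  by_cases h : p.2 = i <;> simp [h]

lemma pairCocycle_single_eq_zero {i : ℕ} {v : ℕ → ZMod 2} (hv : ∀ n < i, v n = 0) :
    pairCocycle (Pi.single i 1) v = 0 := by
  funext p
  rw [pairCocycle_single_apply]
  split_ifs with h
  · exact hv _ h.2
  · rfl

lemma pairCocycle_single_single {i j : ℕ} (h : i < j) :
    pairCocycle (Pi.single j 1) (Pi.single i 1) = Pi.single (i, j) 1 := by
  funext p
  rw [pairCocycle_single_apply, Pi.single_apply]
  obtain ⟨a, b⟩ := p
  by_cases hb : b = j <;> by_cases ha : a = i <;> simp [*]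

abbrev GrpGModel := CentralExt pairCocycle

def modelGen (i : ℕ) : GrpGModel := ⟨Pi.single i 1, 0⟩

lemma modelGen_mul_self (i : ℕ) : modelGen i * modelGen i = 1 := by
  ext n
  · exact CharTwo.add_self_eq_zero (Pi.single (M := fun _ => ZMod 2) i 1 n)
  · have hzero : pairCocycle (Pi.single i 1) (Pi.single i 1) = 0 :=
      pairCocycle_single_eq_zero fun n hn => Pi.single_eq_of_ne hn.ne _
    simp [modelGen, hzero]

lemma gc_modelGen {i j : ℕ} (h : i < j) :
    gc (modelGen i) (modelGen j) = ⟨0, Pi.single (i, j) 1⟩ := by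
  have hzero : pairCocycle (Pi.single i 1) (Pi.single j 1) = 0 :=
    pairCocycle_single_eq_zero fun n hn => Pi.single_eq_of_ne (hn.trans h).ne _
  rw [CentralExt.gc_eq, modelGen, modelGen, pairCocycle_single_single h, hzero, zero_sub,
    ← Pi.single_neg, show (-1 : ZMod 2) = 1 from rfl]

lemma modelGen_rels : ∀ w ∈ grpRels, FreeGroup.lift modelGen w = 1 := by
  rintro w (⟨i, rfl⟩ | ⟨i, j, k, rfl⟩)
  · simp [pow_two, modelGen_mul_self]
  · simp [map_gc, CentralExt.gc_gc_eq_one]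

def toModel : GrpG →* GrpGModel := PresentedGroup.toGroup modelGen_rels

lemma toModel_yy (i : ℕ) : toModel (yy i) = modelGen i := PresentedGroup.toGroup.of modelGen_rels

end Model

section Relations

lemma yy_mul_self (i : ℕ) : yy i * yy i = 1 := by
  have h := PresentedGroup.one_of_mem (rels := grpRels) (Or.inl ⟨i, rfl⟩)
  rwa [map_pow, pow_two] at h

lemma yy_inv (i : ℕ) : (yy i)⁻¹ = yy i :=
  inv_eq_of_mul_eq_one_right (yy_mul_self i)

lemma gc_gc_yy (i j k : ℕ) : gc (gc (yy i) (yy j)) (yy k) = 1 := by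
  have h := PresentedGroup.one_of_mem (rels := grpRels) (Or.inr ⟨i, j, k, rfl⟩)
  rwa [map_gc, map_gc] at h

lemma closure_range_yy : Subgroup.closure (Set.range yy) = ⊤ :=
  PresentedGroup.closure_range_of grpRels

lemma commute_gc_yy (i j : ℕ) (g : GrpG) : Commute (gc (yy i) (yy j)) g := by
  have hle : Subgroup.closure (Set.range yy) ≤ Subgroup.centralizer {gc (yy i) (yy j)} :=
    (Subgroup.closure_le _).mpr <| Set.range_subset_iff.mpr fun k =>
      Subgroup.mem_centralizer_singleton_iff.mpr (gc_eq_one_iff.mp (gc_gc_yy i j k)).eq.symm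
  rw [closure_range_yy] at hle
  exact (Subgroup.mem_centralizer_singleton_iff.mp (hle trivial)).symm

lemma gc_yy_comm (i j : ℕ) : gc (yy j) (yy i) = gc (yy i) (yy j) := by
  conv_lhs => rw [← yy_inv i]
  rw [← mul_gc_mul_inv, ← (commute_gc_yy i j _).eq, mul_inv_cancel_right]

lemma gc_yy_mul_self (i j : ℕ) : gc (yy i) (yy j) * gc (yy i) (yy j) = 1 :=
  mul_eq_one_iff_eq_inv.mpr (by rw [← gc_swap]; exact (gc_yy_comm i j).symm)

end Relations

section Sorting

variable {α M : Type*} [LinearOrder α] [Monoid M] {f : α → M}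

lemma exists_pairwise_lt_mul_prod_eq (hcomm : ∀ a b, Commute (f a) (f b))
    (hsq : ∀ a, f a * f a = 1) (a : α) {P : List α} (hP : P.Pairwise (· < ·)) :
    ∃ P' : List α, P'.Pairwise (· < ·) ∧ P' ⊆ a :: P ∧
      f a * (P.map f).prod = (P'.map f).prod := by
  induction P with
  | nil => exact ⟨[a], by simp, by simp, by simp⟩
  | cons b P ih =>
    obtain ⟨hbP, hP'⟩ := List.pairwise_cons.mp hP
    rcases lt_trichotomy a b with hab | rfl | hba
    · refine ⟨a :: b :: P, List.pairwise_cons.mpr ⟨fun c hc => ?_, hP⟩, List.Subset.refl _, rfl⟩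
      rcases List.mem_cons.mp hc with rfl | hc
      exacts [hab, hab.trans (hbP c hc)]
    · refine ⟨P, hP', fun c hc => by simp [hc], ?_⟩
      rw [List.map_cons, List.prod_cons, ← mul_assoc, hsq, one_mul]
    · obtain ⟨P', hsorted, hsub, hprod⟩ := ih hP'
      refine ⟨b :: P', List.pairwise_cons.mpr ⟨fun c hc => ?_, hsorted⟩, ?_, ?_⟩
      · rcases List.mem_cons.mp (hsub hc) with rfl | hc
        exacts [hba, hbP c hc]
      · refine List.cons_subset.mpr ⟨by simp, fun c hc => ?_⟩
        rcases List.mem_cons.mp (hsub hc) with rfl | hc <;> simp [hc]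
      · simp only [List.map_cons, List.prod_cons]
        rw [← hprod, ← mul_assoc, ← mul_assoc, (hcomm a b).eq]

lemma exists_pairwise_lt_prod_eq (hcomm : ∀ a b, Commute (f a) (f b))
    (hsq : ∀ a, f a * f a = 1) (Q : List α) :
    ∃ P : List α, P.Pairwise (· < ·) ∧ P ⊆ Q ∧ (Q.map f).prod = (P.map f).prod := by
  induction Q with
  | nil => exact ⟨[], .nil, List.Subset.refl _, rfl⟩
  | cons a Q ih =>
    obtain ⟨P, hP, hsub, hprod⟩ := ih
    obtain ⟨P', hP', hsub', hprod'⟩ := exists_pairwise_lt_mul_prod_eq hcomm hsq a hP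
    exact ⟨P', hP', List.Subset.trans hsub' (List.cons_subset_cons _ hsub),
      by rw [List.map_cons, List.prod_cons, hprod, hprod']⟩

end Sorting

section Existence

def yc (q : ℕ × ℕ) : GrpG := gc (yy q.1) (yy q.2)

lemma commute_yc (q : ℕ × ℕ) (g : GrpG) : Commute (yc q) g := commute_gc_yy q.1 q.2 g

lemma yc_mul_self (q : ℕ × ℕ) : yc q * yc q = 1 := gc_yy_mul_self q.1 q.2

lemma yy_mul_yy (j k : ℕ) : yy k * yy j = yy j * yy k * yc (j, k) := by
  rw [yc, ← gc_yy_comm, gc]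
  group

lemma exists_yy_mul_prod_eq (k : ℕ) {L : List ℕ} (hL : L.Pairwise (· < ·)) :
    ∃ (L' : List ℕ) (Q : List (ℕ × ℕ)), L'.Pairwise (· < ·) ∧ L' ⊆ k :: L ∧
      (∀ q ∈ Q, q.1 < q.2) ∧ yy k * (L.map yy).prod = (L'.map yy).prod * (Q.map yc).prod := by
  induction L with
  | nil => exact ⟨[k], [], by simp, by simp, by simp, by simp⟩
  | cons j L ih =>
    obtain ⟨hjL, hL'⟩ := List.pairwise_cons.mp hL
    rcases lt_trichotomy k j with hkj | rfl | hjk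
    · refine ⟨k :: j :: L, [], List.pairwise_cons.mpr ⟨fun c hc => ?_, hL⟩,
        List.Subset.refl _, by simp, by simp⟩
      rcases List.mem_cons.mp hc with rfl | hc
      exacts [hkj, hkj.trans (hjL c hc)]
    · refine ⟨L, [], hL', fun c hc => by simp [hc], by simp, ?_⟩
      rw [List.map_cons, List.prod_cons, ← mul_assoc, yy_mul_self, one_mul, List.map_nil,
        List.prod_nil, mul_one]
    · obtain ⟨L', Q, hsorted, hsub, hQ, hprod⟩ := ih hL'
      refine ⟨j :: L', (j, k) :: Q, List.pairwise_cons.mpr ⟨fun c hc => ?_, hsorted⟩, ?_,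
        ?_, ?_⟩
      · rcases List.mem_cons.mp (hsub hc) with rfl | hc
        exacts [hjk, hjL c hc]
      · refine List.cons_subset.mpr ⟨by simp, fun c hc => ?_⟩
        rcases List.mem_cons.mp (hsub hc) with rfl | hc <;> simp [hc]
      · rintro q (_ | ⟨_, hq⟩)
        exacts [hjk, hQ q hq]
      · simp only [List.map_cons, List.prod_cons]
        calc yy k * (yy j * (L.map yy).prod)
            = yy j * (yy k * (L.map yy).prod) * yc (j, k) := by
              rw [← mul_assoc, yy_mul_yy, mul_assoc _ (yc _), (commute_yc _ _).eq]
              group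
          _ = yy j * (L'.map yy).prod * (yc (j, k) * (Q.map yc).prod) := by
              rw [hprod, (commute_yc _ _).eq]
              group

def IsNormalForm (r : LinearOrder (ℕ × ℕ)) (p : List ℕ × List (ℕ × ℕ)) : Prop :=
  p.1.Pairwise (· < ·) ∧ (∀ q ∈ p.2, q.1 < q.2) ∧ p.2.Pairwise r.lt

def nfEval (p : List ℕ × List (ℕ × ℕ)) : GrpG := (p.1.map yy).prod * (p.2.map yc).prod

lemma exists_isNormalForm_yy_mul (r : LinearOrder (ℕ × ℕ)) (k : ℕ)
    {p : List ℕ × List (ℕ × ℕ)} (hp : IsNormalForm r p) :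
    ∃ p', IsNormalForm r p' ∧ yy k * nfEval p = nfEval p' := by
  obtain ⟨L, Q, hL, -, hQ, hprod⟩ := exists_yy_mul_prod_eq k hp.1
  obtain ⟨P, hP, hsub, hprodP⟩ := @exists_pairwise_lt_prod_eq _ _ r _ yc
    (fun a b => commute_yc a (yc b)) yc_mul_self (Q ++ p.2)
  refine ⟨(L, P), ⟨hL, fun q hq => ?_, hP⟩, ?_⟩
  · rcases List.mem_append.mp (hsub hq) with hq | hq
    exacts [hQ q hq, hp.2.1 q hq]
  · rw [nfEval, nfEval, ← mul_assoc, hprod, mul_assoc, ← List.prod_append, ← List.map_append,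
      hprodP]

lemma exists_isNormalForm (r : LinearOrder (ℕ × ℕ)) (a : GrpG) :
    ∃ p, IsNormalForm r p ∧ a = nfEval p := by
  have ha : a ∈ Subgroup.closure (Set.range yy) := closure_range_yy ▸ Subgroup.mem_top a
  induction ha using Subgroup.closure_induction_left with
  | one => exact ⟨([], []), ⟨.nil, by simp, .nil⟩, by simp [nfEval]⟩
  | mul_left _ hk _ _ ih =>
    obtain ⟨k, rfl⟩ := hk
    obtain ⟨p, hp, rfl⟩ := ih
    obtain ⟨p', hp', h⟩ := exists_isNormalForm_yy_mul r k hp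
    exact ⟨p', hp', h⟩
  | inv_mul_cancel _ hk _ _ ih =>
    obtain ⟨k, rfl⟩ := hk
    obtain ⟨p, hp, rfl⟩ := ih
    obtain ⟨p', hp', h⟩ := exists_isNormalForm_yy_mul r k hp
    exact ⟨p', hp', by rw [yy_inv, h]⟩

end Existence

section Uniqueness

def memIndicator {α : Type*} [DecidableEq α] (l : List α) : α → ZMod 2 :=
  fun a => if a ∈ l then 1 else 0

lemma mem_iff_mem_of_memIndicator_eq {α : Type*} [DecidableEq α] {l₁ l₂ : List α}
    (h : memIndicator l₁ = memIndicator l₂) (a : α) : a ∈ l₁ ↔ a ∈ l₂ := by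
  have ha := congrFun h a
  simp only [memIndicator] at ha
  split_ifs at ha with h₁ h₂ h₂ <;> simp_all

lemma toModel_prod_yy {L : List ℕ} (hL : L.Pairwise (· < ·)) :
    toModel (L.map yy).prod = ⟨memIndicator L, 0⟩ := by
  induction L with
  | nil => ext <;> simp [memIndicator]
  | cons i L ih =>
    obtain ⟨hiL, hL'⟩ := List.pairwise_cons.mp hL
    have hi : i ∉ L := fun h => lt_irrefl i (hiL i h)
    rw [List.map_cons, List.prod_cons, map_mul, toModel_yy, ih hL']
    ext n
    · by_cases hn : n = i
      · subst hn; simp [modelGen, memIndicator, hi]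
      · simp [modelGen, memIndicator, hn]
    · have hzero : pairCocycle (Pi.single i 1) (memIndicator L) = 0 :=
        pairCocycle_single_eq_zero fun n hn =>
          if_neg fun h => (hn.trans (hiL n h)).false
      simp [modelGen, hzero]

lemma toModel_prod_yc {P : List (ℕ × ℕ)} (hP : ∀ q ∈ P, q.1 < q.2) (hnodup : P.Nodup) :
    toModel (P.map yc).prod = ⟨0, memIndicator P⟩ := by
  induction P with
  | nil => ext <;> simp [memIndicator]
  | cons q P ih =>
    obtain ⟨hq, hnodup'⟩ := List.nodup_cons.mp hnodup
    rw [List.map_cons, List.prod_cons, map_mul, yc, map_gc, toModel_yy, toModel_yy,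
      gc_modelGen (hP q List.mem_cons_self), ih (fun q' h => hP q' (List.mem_cons_of_mem _ h))
        hnodup']
    ext p
    · simp
    · by_cases hp : p = q
      · subst hp; simp [memIndicator, hq]
      · simp [memIndicator, hp]

lemma toModel_nfEval {r : LinearOrder (ℕ × ℕ)} {p : List ℕ × List (ℕ × ℕ)}
    (hp : IsNormalForm r p) : toModel (nfEval p) = ⟨memIndicator p.1, memIndicator p.2⟩ := by
  let _ : LinearOrder (ℕ × ℕ) := r
  rw [nfEval, map_mul, toModel_prod_yy hp.1, toModel_prod_yc hp.2.1 hp.2.2.nodup]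
  ext <;> simp

lemma eq_of_nfEval_eq {r : LinearOrder (ℕ × ℕ)} {p p' : List ℕ × List (ℕ × ℕ)}
    (hp : IsNormalForm r p) (hp' : IsNormalForm r p') (h : nfEval p = nfEval p') : p = p' := by
  let _ : LinearOrder (ℕ × ℕ) := r
  have himage := congrArg toModel h
  rw [toModel_nfEval hp, toModel_nfEval hp'] at himage
  obtain ⟨h₁, h₂⟩ := CentralExt.mk.inj himage
  exact Prod.ext (hp.1.eq_of_mem_iff hp'.1 (mem_iff_mem_of_memIndicator_eq h₁))
    (hp.2.2.eq_of_mem_iff hp'.2.2 (mem_iff_mem_of_memIndicator_eq h₂))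

end Uniqueness

/-- for any fixed linear order on pairs, every element of `𝒢` has a
unique normal form `y_{i₁} ⋯ y_{i_q} (y_{j₁},y_{j₂}) ⋯ (y_{j_{2q'-1}},y_{j_{2q'}})`
with `i₁ < ⋯ < i_q`, `j_{2s-1} < j_{2s}`, and the pairs strictly increasing. -/
theorem GrpG_normal_form (r : LinearOrder (ℕ × ℕ)) (a : GrpG) :
    ∃! p : List ℕ × List (ℕ × ℕ),
      List.Pairwise (· < ·) p.1 ∧
      (∀ q ∈ p.2, q.1 < q.2) ∧
      List.Pairwise (fun q q' => r.lt q q') p.2 ∧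
      a = (p.1.map yy).prod * (p.2.map fun q => gc (yy q.1) (yy q.2)).prod := by
  obtain ⟨p, hp, rfl⟩ := exists_isNormalForm r a
  refine ⟨p, ⟨hp.1, hp.2.1, hp.2.2, rfl⟩, ?_⟩
  rintro p' ⟨h₁, h₂, h₃, h⟩
  exact eq_of_nfEval_eq ⟨h₁, h₂, h₃⟩ hp h.symm
end
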